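/- For every ε > 0 there exists N such that for all n ≥ N, g(n) ≤ 2^((1+ε)·H(1/3)·n), where H(x) = -x·log₂(x) - (1-x)·log₂(1-x) is the binary entropy function. -/

import Mathlib

/-- `Separates G u v T` means every walk from `u` to `v` in `G` meets `T`;
for `u, v ∉ T` this says `u` and `v` lie in different connected components of `G \ T`. -/
def Separates {V : Type*} (G : SimpleGraph V) (u v : V) (T : Set V) : Prop :=
  ∀ p : G.Walk u v, ∃ x ∈ p.support, x ∈ T

/-- `T` is an inclusion-wise minimal `u`–`v` separator in `G`:
`T ⊆ V(G) \ {u, v}`, removing `T` puts `u` and `v` in different connected components,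
and removing any proper subset `T' ⊊ T` leaves `u` and `v` in the same component. -/
def IsMinSeparator {V : Type*} (G : SimpleGraph V) (u v : V) (T : Set V) : Prop :=
  u ∉ T ∧ v ∉ T ∧ Separates G u v T ∧ ∀ T' ⊂ T, ¬ Separates G u v T'

/-- `mc G u v` is the number of inclusion-wise minimal `u`–`v` separators in `G`. -/
noncomputable def mc {V : Type*} (G : SimpleGraph V) (u v : V) : ℕ :=
  {T : Set V | IsMinSeparator G u v T}.ncard

/-- `g n` is the maximum of `mc G u v` over graphs `G` on `n + 2` vertices and
pairs of distinct vertices `u ≠ v`. -/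
noncomputable def g (n : ℕ) : ℕ :=
  sSup {k | ∃ (G : SimpleGraph (Fin (n + 2))) (u v : Fin (n + 2)), u ≠ v ∧ mc G u v = k}

/-- `T` is a vertex cut of `G`: removing `T` disconnects `G`, i.e. some two remaining
vertices lie in different connected components of `G \ T`. -/
def IsCutSet {V : Type*} (G : SimpleGraph V) (T : Set V) : Prop :=
  ∃ u v, u ∉ T ∧ v ∉ T ∧ Separates G u v T

/-- `T` is an inclusion-wise minimal vertex cut of `G`. -/
def IsMinCutSet {V : Type*} (G : SimpleGraph V) (T : Set V) : Prop :=
  IsCutSet G T ∧ ∀ T' ⊂ T, ¬ IsCutSet G T'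

/-- `c n` is the maximum number of inclusion-wise minimal vertex cuts of a graph
on `n` vertices. -/
noncomputable def c (n : ℕ) : ℕ :=
  sSup {k | ∃ G : SimpleGraph (Fin n), {T : Set (Fin n) | IsMinCutSet G T}.ncard = k}

/-- The binary entropy function `H(x) = -x log₂ x - (1 - x) log₂ (1 - x)`. -/
noncomputable def binH (x : ℝ) : ℝ :=
  -x * Real.logb 2 x - (1 - x) * Real.logb 2 (1 - x)

/-- The outer neighbourhood of `X` in `G`: all vertices outside `X` having a
neighbour in `X`. -/
def outNbhd {V : Type*} (G : SimpleGraph V) (X : Set V) : Set V :=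
  {y | y ∉ X ∧ ∃ x ∈ X, G.Adj x y}

/-- The vertex set of the connected component of `u` in `G \ T`: all vertices
reachable from `u` by a walk avoiding `T`. -/
def compOf {V : Type*} (G : SimpleGraph V) (T : Set V) (u : V) : Set V :=
  {x | ∃ p : G.Walk u x, ∀ y ∈ p.support, y ∉ T}


section aux
variable {V : Type*} {G : SimpleGraph V} {T : Set V} {u v : V}

lemma mem_compOf_self (hu : u ∉ T) : u ∈ compOf G T u :=
  ⟨SimpleGraph.Walk.nil, by simp [hu]⟩

lemma compOf_disjoint_T : ∀ x ∈ compOf G T u, x ∉ T := by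
  rintro x ⟨p, hp⟩
  exact hp x p.end_mem_support

lemma compOf_trans {b : V} (hb : b ∈ compOf G T u) {x : V} (hx : x ∈ compOf G T b) :
    x ∈ compOf G T u := by
  obtain ⟨p, hp⟩ := hb
  obtain ⟨q, hq⟩ := hx
  refine ⟨p.append q, fun y hy => ?_⟩
  rw [SimpleGraph.Walk.mem_support_append_iff] at hy
  exact hy.elim (hp y) (hq y)

lemma adj_mem_compOf {a b : V} (ha : a ∉ T) (hb : b ∉ T) (h : G.Adj a b) :
    b ∈ compOf G T a := by
  refine ⟨SimpleGraph.Walk.cons h SimpleGraph.Walk.nil, ?_⟩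
  intro y hy
  simp at hy
  rcases hy with rfl | rfl <;> assumption

lemma first_hit : ∀ {a w : V} (p : G.Walk a w), a ∉ T → (∃ y ∈ p.support, y ∈ T) →
    ∃ t ∈ T, t ∈ p.support ∧ ∃ x ∈ compOf G T a, G.Adj x t := by
  intro a w p
  induction p with
  | nil =>
    rintro ha ⟨y, hy, hyT⟩; simp at hy; subst hy; exact absurd hyT ha
  | @cons a b w h q ih =>
    rintro ha ⟨y, hy, hyT⟩
    by_cases hbT : b ∈ T
    · exact ⟨b, hbT, by simp [SimpleGraph.Walk.support_cons],
        a, mem_compOf_self ha, h⟩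
    · have hyq : y ∈ q.support := by
        rw [SimpleGraph.Walk.support_cons, List.mem_cons] at hy
        rcases hy with rfl | hy
        · exact absurd hyT ha
        · exact hy
      obtain ⟨t, htT, hts, x, hxC, hadj⟩ := ih hbT ⟨y, hyq, hyT⟩
      refine ⟨t, htT, by simp [SimpleGraph.Walk.support_cons, hts], x,
        compOf_trans (adj_mem_compOf ha hbT h) hxC, hadj⟩

lemma outNbhd_compOf_subset : outNbhd G (compOf G T u) ⊆ T := by
  rintro y ⟨hyC, x, ⟨p, hp⟩, hadj⟩
  by_contra hyT
  exact hyC ⟨p.concat hadj, by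
    intro z hz
    rw [SimpleGraph.Walk.support_concat, List.mem_append] at hz
    rcases hz with hz | hz
    · exact hp z hz
    · simp at hz; subst hz; exact hyT⟩

lemma minSep_eq_outNbhd (hmin : IsMinSeparator G u v T) :
    T = outNbhd G (compOf G T u) := by
  obtain ⟨hu, hv, hsep, hm⟩ := hmin
  refine Set.Subset.antisymm ?_ outNbhd_compOf_subset
  intro t htT
  have hne : ¬ Separates G u v (T \ {t}) :=
    hm _ (Set.sdiff_singleton_ssubset.mpr htT)
  rw [Separates] at hne
  push_neg at hne
  obtain ⟨p, hp⟩ := hne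
  -- every vertex of p in T equals t
  obtain ⟨y, hy, hyT⟩ := hsep p
  obtain ⟨t', ht'T, ht's, x, hxC, hadj⟩ := first_hit p hu ⟨y, hy, hyT⟩
  have : t' = t := by
    have := hp t' ht's
    simp [Set.mem_diff, ht'T] at this
    exact this
  subst this
  exact ⟨fun hC => compOf_disjoint_T t' hC ht'T, x, hxC, hadj⟩

lemma separates_symm (h : Separates G u v T) : Separates G v u T := by
  intro p
  obtain ⟨x, hx, hxT⟩ := h p.reverse
  rw [SimpleGraph.Walk.support_reverse, List.mem_reverse] at hx
  exact ⟨x, hx, hxT⟩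

lemma isMinSeparator_symm (h : IsMinSeparator G u v T) : IsMinSeparator G v u T := by
  obtain ⟨hu, hv, hsep, hm⟩ := h
  exact ⟨hv, hu, separates_symm hsep, fun T' hT' hs => hm T' hT' (separates_symm hs)⟩

lemma not_mem_compOf (hsep : Separates G u v T) : v ∉ compOf G T u := by
  rintro ⟨p, hp⟩
  obtain ⟨x, hx, hxT⟩ := hsep p
  exact hp x hx hxT

lemma compOf_disj (hsep : Separates G u v T) :
    Disjoint (compOf G T u) (compOf G T v) := by
  rw [Set.disjoint_left]
  rintro x ⟨p, hp⟩ ⟨q, hq⟩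
  obtain ⟨y, hy, hyT⟩ := hsep (p.append q.reverse)
  rw [SimpleGraph.Walk.mem_support_append_iff] at hy
  rcases hy with hy | hy
  · exact hp y hy hyT
  · rw [SimpleGraph.Walk.support_reverse, List.mem_reverse] at hy
    exact hq y hy hyT

end aux

section count
variable {W : Type*} [Fintype W] [DecidableEq W]

variable {W : Type*} [Fintype W] [DecidableEq W]

lemma count_small_sets (m : ℕ) :
    {S : Set W | S.ncard ≤ m}.ncard ≤ ∑ i ∈ Finset.range (m + 1), (Fintype.card W).choose i := by
  classical
  have h1 : {S : Set W | S.ncard ≤ m}.ncard ≤ {s : Finset W | s.card ≤ m}.ncard := by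
    apply Set.ncard_le_ncard_of_injOn (fun S => S.toFinite.toFinset)
    · intro S hS
      rw [Set.mem_setOf_eq, ← Set.ncard_eq_toFinset_card S S.toFinite]
      exact hS
    · intro S _ S' _ h
      have := congrArg (fun s : Finset W => (s : Set W)) h
      simpa using this
  refine h1.trans ?_
  have h2 : {s : Finset W | s.card ≤ m}.ncard
      = (Finset.univ.filter (fun s : Finset W => s.card ≤ m)).card := by
    rw [← Set.toFinset_setOf, Set.ncard_eq_toFinset_card']
  rw [h2]
  have h3 : (Finset.univ.filter (fun s : Finset W => s.card ≤ m))
      ⊆ (Finset.range (m + 1)).biUnion (fun i => Finset.powersetCard i Finset.univ) := by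
    intro s hs
    simp only [Finset.mem_filter] at hs
    refine Finset.mem_biUnion.mpr ⟨s.card, Finset.mem_range.mpr (by omega), ?_⟩
    simp [Finset.mem_powersetCard_univ]
  refine (Finset.card_le_card h3).trans ?_
  refine (Finset.card_biUnion_le).trans ?_
  apply Finset.sum_le_sum
  intro i _
  rw [Finset.card_powersetCard]
  simp

lemma mc_le_count (G : SimpleGraph W) (u v : W) (huv : u ≠ v) :
    mc G u v ≤ 3 * ∑ i ∈ Finset.range ((Fintype.card W - 2) / 3 + 1),
      (Fintype.card W).choose i := by
  classical
  set n := Fintype.card W - 2 with hn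
  set m := n / 3 with hm
  set 𝒮 := {T : Set W | IsMinSeparator G u v T} with h𝒮
  -- size trichotomy
  have hsize : ∀ T ∈ 𝒮, T.ncard ≤ m ∨ (compOf G T u \ {u}).ncard ≤ m ∨
      (compOf G T v \ {v}).ncard ≤ m := by
    intro T hT
    obtain ⟨hu, hv, hsep, _⟩ := hT
    set A := compOf G T u \ {u} with hA
    set B := compOf G T v \ {v} with hB
    have hvsep : Separates G v u T := separates_symm hsep
    have hAsub : A ⊆ (Set.univ : Set W) \ {u, v} := by
      rintro x ⟨hx, hxu⟩
      refine ⟨trivial, ?_⟩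
      simp only [Set.mem_insert_iff, Set.mem_singleton_iff] at *
      push_neg
      exact ⟨hxu, fun h => not_mem_compOf hsep (h ▸ hx)⟩
    have hBsub : B ⊆ (Set.univ : Set W) \ {u, v} := by
      rintro x ⟨hx, hxv⟩
      refine ⟨trivial, ?_⟩
      simp only [Set.mem_insert_iff, Set.mem_singleton_iff] at *
      push_neg
      exact ⟨fun h => not_mem_compOf hvsep (h ▸ hx), hxv⟩
    have hTsub : T ⊆ (Set.univ : Set W) \ {u, v} := by
      intro x hx
      refine ⟨trivial, ?_⟩
      simp only [Set.mem_insert_iff, Set.mem_singleton_iff]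
      push_neg
      exact ⟨fun h => hu (h ▸ hx), fun h => hv (h ▸ hx)⟩
    have hAB : Disjoint A B :=
      (compOf_disj hsep).mono Set.diff_subset Set.diff_subset
    have hAT : Disjoint A T := by
      rw [Set.disjoint_left]
      rintro x ⟨hx, _⟩ hxT
      exact compOf_disjoint_T x hx hxT
    have hBT : Disjoint B T := by
      rw [Set.disjoint_left]
      rintro x ⟨hx, _⟩ hxT
      exact compOf_disjoint_T x hx hxT
    have hunion : (A ∪ B ∪ T).ncard = A.ncard + B.ncard + T.ncard := by
      rw [Set.ncard_union_eq (by exact Set.disjoint_union_left.mpr ⟨hAT, hBT⟩)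
        (Set.toFinite _) (Set.toFinite _),
        Set.ncard_union_eq hAB (Set.toFinite _) (Set.toFinite _)]
    have hle : (A ∪ B ∪ T).ncard ≤ ((Set.univ : Set W) \ {u, v}).ncard :=
      Set.ncard_le_ncard (by
        refine Set.union_subset (Set.union_subset hAsub hBsub) hTsub) (Set.toFinite _)
    have hcard : ((Set.univ : Set W) \ {u, v}).ncard = n := by
      rw [Set.ncard_diff (by simp) (Set.toFinite _)]
      rw [Set.ncard_univ, Set.ncard_pair huv]
      simp [hn, Nat.card_eq_fintype_card]
    rw [hunion, hcard] at hle
    omega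
  -- split into three families
  set S1 := {T ∈ 𝒮 | T.ncard ≤ m} with hS1
  set S2 := {T ∈ 𝒮 | (compOf G T u \ {u}).ncard ≤ m} with hS2
  set S3 := {T ∈ 𝒮 | (compOf G T v \ {v}).ncard ≤ m} with hS3
  have hcover : 𝒮 ⊆ S1 ∪ S2 ∪ S3 := by
    intro T hT
    rcases hsize T hT with h | h | h
    · exact Or.inl (Or.inl ⟨hT, h⟩)
    · exact Or.inl (Or.inr ⟨hT, h⟩)
    · exact Or.inr ⟨hT, h⟩
  have hmc : mc G u v ≤ S1.ncard + S2.ncard + S3.ncard := by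
    calc mc G u v ≤ (S1 ∪ S2 ∪ S3).ncard :=
          Set.ncard_le_ncard hcover (Set.toFinite _)
      _ ≤ (S1 ∪ S2).ncard + S3.ncard := Set.ncard_union_le _ _
      _ ≤ S1.ncard + S2.ncard + S3.ncard := by
          exact Nat.add_le_add_right (Set.ncard_union_le _ _) _
  set B : ℕ := {S : Set W | S.ncard ≤ m}.ncard with hBdef
  have h1 : S1.ncard ≤ B :=
    Set.ncard_le_ncard (fun T hT => hT.2) (Set.toFinite _)
  -- injectivity for S2
  have hinj2 : Set.InjOn (fun T => compOf G T u \ {u}) S2 := by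
    rintro T ⟨hT, _⟩ T' ⟨hT', _⟩ h
    simp only at h
    have hcu : compOf G T u = compOf G T' u := by
      ext x
      by_cases hx : x = u
      · subst hx
        simp [mem_compOf_self hT.1, mem_compOf_self hT'.1]
      · constructor
        · intro hmem
          have : x ∈ compOf G T' u \ {u} := h ▸ ⟨hmem, hx⟩
          exact this.1
        · intro hmem
          have : x ∈ compOf G T u \ {u} := h ▸ ⟨hmem, hx⟩
          exact this.1
    rw [minSep_eq_outNbhd hT, minSep_eq_outNbhd hT', hcu]
  have hinj3 : Set.InjOn (fun T => compOf G T v \ {v}) S3 := by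
    rintro T ⟨hT, _⟩ T' ⟨hT', _⟩ h
    simp only at h
    have hTv := isMinSeparator_symm hT
    have hTv' := isMinSeparator_symm hT'
    have hcu : compOf G T v = compOf G T' v := by
      ext x
      by_cases hx : x = v
      · subst hx
        simp [mem_compOf_self hT.2.1, mem_compOf_self hT'.2.1]
      · constructor
        · intro hmem
          have : x ∈ compOf G T' v \ {v} := h ▸ ⟨hmem, hx⟩
          exact this.1
        · intro hmem
          have : x ∈ compOf G T v \ {v} := h ▸ ⟨hmem, hx⟩
          exact this.1
    rw [minSep_eq_outNbhd hTv, minSep_eq_outNbhd hTv', hcu]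
  have h2 : S2.ncard ≤ B := by
    rw [← Set.ncard_image_of_injOn hinj2]
    exact Set.ncard_le_ncard (by rintro _ ⟨T, hT, rfl⟩; exact hT.2) (Set.toFinite _)
  have h3 : S3.ncard ≤ B := by
    rw [← Set.ncard_image_of_injOn hinj3]
    exact Set.ncard_le_ncard (by rintro _ ⟨T, hT, rfl⟩; exact hT.2) (Set.toFinite _)
  have hB : B ≤ ∑ i ∈ Finset.range (m + 1), (Fintype.card W).choose i :=
    count_small_sets m
  omega

end count

lemma choose_real_bound (N i : ℕ) : ((N.choose i : ℝ)) ≤ (3/2)^N * 2^i := by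
  rcases le_or_gt i N with hiN | hiN
  · have hsum : ∑ k ∈ Finset.range (N + 1),
        ((1:ℝ)/3)^k * ((2:ℝ)/3)^(N - k) * (N.choose k) = 1 := by
      have := add_pow ((1:ℝ)/3) ((2:ℝ)/3) N
      norm_num at this
      rw [← this]
    have hterm : ((1:ℝ)/3)^i * ((2:ℝ)/3)^(N - i) * (N.choose i) ≤ 1 := by
      have := Finset.single_le_sum
        (f := fun k => ((1:ℝ)/3)^k * ((2:ℝ)/3)^(N - k) * (N.choose k))
        (fun k _ => by positivity) (Finset.mem_range.mpr (show i < N + 1 by omega))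
      rwa [hsum] at this
    have e1 : ((1:ℝ)/3)^i * 3^i = 1 := by rw [← mul_pow]; norm_num
    have e2 : ((2:ℝ)/3)^(N-i) * (3/2)^(N-i) = 1 := by rw [← mul_pow]; norm_num
    have hBpos : (0:ℝ) ≤ 3^i * (3/2)^(N-i) := by positivity
    have key : ((N.choose i : ℝ)) ≤ 3^i * (3/2)^(N-i) := by
      have h2 := mul_le_mul_of_nonneg_right hterm hBpos
      calc ((N.choose i : ℝ))
          = ((1:ℝ)/3)^i * ((2:ℝ)/3)^(N - i) * (N.choose i) * (3^i * (3/2)^(N-i)) := by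
            have : ((1:ℝ)/3)^i * ((2:ℝ)/3)^(N - i) * (3^i * (3/2)^(N-i)) = 1 := by
              rw [mul_mul_mul_comm, e1, e2, one_mul]
            calc ((N.choose i : ℝ)) = (N.choose i : ℝ) *
                (((1:ℝ)/3)^i * ((2:ℝ)/3)^(N - i) * (3^i * (3/2)^(N-i))) := by rw [this, mul_one]
              _ = ((1:ℝ)/3)^i * ((2:ℝ)/3)^(N - i) * (N.choose i) * (3^i * (3/2)^(N-i)) := by ring
        _ ≤ 1 * (3^i * (3/2)^(N-i)) := h2
        _ = 3^i * (3/2)^(N-i) := one_mul _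
    refine key.trans_eq ?_
    have : (3:ℝ)^i = (3/2)^i * 2^i := by rw [← mul_pow]; norm_num
    rw [this, mul_right_comm, ← pow_add]
    congr 2
    omega
  · rw [Nat.choose_eq_zero_of_lt hiN]
    push_cast
    positivity

lemma binH_third : binH (1/3) = Real.logb 2 3 - 2/3 := by
  have h1 : Real.logb 2 ((1:ℝ)/3) = -Real.logb 2 3 := by
    rw [one_div, Real.logb_inv]
  have h2 : Real.logb 2 (1 - (1:ℝ)/3) = 1 - Real.logb 2 3 := by
    have : (1 - (1:ℝ)/3) = 2/3 := by norm_num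
    rw [this, Real.logb_div (by norm_num) (by norm_num), Real.logb_self_eq_one (by norm_num : (1:ℝ) < 2)]
  rw [binH, h1, h2]
  ring

lemma logb_two_three_gt : (1:ℝ) < Real.logb 2 3 := by
  have := Real.logb_lt_logb (b := 2) (x := 2) (y := 3) one_lt_two (by norm_num) (by norm_num)
  rwa [Real.logb_self_eq_one (by norm_num : (1:ℝ) < 2)] at this

lemma rpow_H_eq (n : ℕ) : (2:ℝ) ^ (binH (1/3) * n) = (3/2)^n * (2:ℝ)^((n:ℝ)/3) := by
  have hlog : Real.logb 2 ((3:ℝ)/2) = Real.logb 2 3 - 1 := by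
    rw [Real.logb_div (by norm_num) (by norm_num),
      Real.logb_self_eq_one (by norm_num : (1:ℝ) < 2)]
  have hH : binH (1/3) * n = Real.logb 2 ((3:ℝ)/2) * n + (n:ℝ)/3 := by
    rw [binH_third, hlog]; ring
  rw [hH, Real.rpow_add (by norm_num), Real.rpow_mul (by norm_num),
    Real.rpow_logb (by norm_num) (by norm_num) (by norm_num), Real.rpow_natCast]


lemma lin_le_rpow (a : ℝ) (ha : 0 < a) :
    ∃ N : ℕ, ∀ n : ℕ, N ≤ n → (27/4 : ℝ) * ((n:ℝ) + 1) ≤ (2:ℝ) ^ (a * n) := by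
  set b := a * Real.log 2 with hb
  have hbpos : 0 < b := mul_pos ha (Real.log_pos one_lt_two)
  refine ⟨⌈54 / b^2⌉₊ + 1, fun n hn => ?_⟩
  have hn1 : (1:ℝ) ≤ n := by
    have : 1 ≤ n := le_trans (by omega) hn
    exact_mod_cast this
  have hnb : 54 ≤ b^2 * n := by
    have h1 : (54 / b^2 : ℝ) ≤ ⌈54 / b^2⌉₊ := Nat.le_ceil _
    have h2 : ((⌈54 / b^2⌉₊ : ℝ)) ≤ n := by
      have : ((⌈54 / b^2⌉₊ + 1 : ℕ) : ℝ) ≤ n := by exact_mod_cast hn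
      push_cast at this; linarith
    have h3 : (54 / b^2 : ℝ) ≤ n := le_trans h1 h2
    have hb2 : (0:ℝ) < b^2 := by positivity
    rw [div_le_iff₀ hb2] at h3
    linarith [h3]
  have hexp : (2:ℝ) ^ (a * n) = Real.exp (b * n) := by
    rw [Real.rpow_def_of_pos (by norm_num), hb]
    ring_nf
  rw [hexp]
  have h4 : b * n / 2 + 1 ≤ Real.exp (b * n / 2) := Real.add_one_le_exp _
  have h5 : Real.exp (b * n) = Real.exp (b * n / 2) ^ 2 := by
    rw [sq, ← Real.exp_add]
    ring_nf
  rw [h5]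
  have h6 : (b * n / 2 + 1) ^ 2 ≤ Real.exp (b * n / 2) ^ 2 := by
    apply pow_le_pow_left₀ (by positivity) h4
  nlinarith [hnb, hn1, hbpos, sq_nonneg (b * n)]


/-- For every `ε > 0` there exists `N` such that for all `n ≥ N`,
`g n ≤ 2 ^ ((1 + ε) · H(1/3) · n)`. -/
theorem g_le_entropy_bound (ε : ℝ) (hε : 0 < ε) :
    ∃ N : ℕ, ∀ n : ℕ, N ≤ n → (g n : ℝ) ≤ (2 : ℝ) ^ ((1 + ε) * binH (1 / 3) * n) := by
  have hHpos : 0 < binH (1/3) := by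
    rw [binH_third]
    linarith [logb_two_three_gt]
  obtain ⟨N, hN⟩ := lin_le_rpow (ε * binH (1/3)) (mul_pos hε hHpos)
  refine ⟨N, fun n hn => ?_⟩
  classical
  set m := n / 3 with hm
  set K : ℕ := 3 * ∑ i ∈ Finset.range (m + 1), (n+2).choose i with hK
  have hg : g n ≤ K := by
    apply csSup_le'
    rintro k ⟨G, u, v, huv, rfl⟩
    have h := mc_le_count G u v huv
    simpa [Fintype.card_fin, Nat.add_sub_cancel] using h
  have hgR : (g n : ℝ) ≤ (K : ℝ) := by exact_mod_cast hg
  have hKR : (K : ℝ) ≤ 3 * ((m:ℝ)+1) * ((3/2)^(n+2) * 2^m) := by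
    have hsum : (∑ i ∈ Finset.range (m + 1), ((n+2).choose i : ℝ))
        ≤ ((m:ℝ)+1) * ((3/2)^(n+2) * 2^m) := by
      calc (∑ i ∈ Finset.range (m + 1), ((n+2).choose i : ℝ))
          ≤ ∑ _i ∈ Finset.range (m + 1), ((3/2:ℝ)^(n+2) * 2^m) := by
            apply Finset.sum_le_sum
            intro i hi
            refine (choose_real_bound (n+2) i).trans ?_
            have : (2:ℝ)^i ≤ 2^m :=
              pow_le_pow_right₀ one_le_two (by exact Nat.lt_succ_iff.mp (Finset.mem_range.mp hi))
            have h32 : (0:ℝ) ≤ (3/2:ℝ)^(n+2) := by positivity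
            nlinarith
        _ = ((m:ℝ)+1) * ((3/2)^(n+2) * 2^m) := by
            rw [Finset.sum_const, Finset.card_range]
            push_cast
            ring
    have : (K : ℝ) = 3 * (∑ i ∈ Finset.range (m + 1), ((n+2).choose i : ℝ)) := by
      rw [hK]; push_cast; ring
    rw [this]
    nlinarith [hsum]
  have hpow : ((3/2:ℝ))^(n+2) * 2^m ≤ (9/4) * (2:ℝ) ^ (binH (1/3) * n) := by
    rw [rpow_H_eq]
    have h2m : (2:ℝ)^m ≤ (2:ℝ)^((n:ℝ)/3) := by
      rw [← Real.rpow_natCast 2 m]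
      apply Real.rpow_le_rpow_of_exponent_le one_le_two
      have h3m : 3 * m ≤ n := by omega
      have : (3:ℝ) * m ≤ n := by exact_mod_cast h3m
      linarith
    have h32 : ((3/2:ℝ))^(n+2) = (9/4) * (3/2)^n := by
      rw [pow_add]; ring
    rw [h32]
    have hpos : (0:ℝ) ≤ (3/2:ℝ)^n := by positivity
    have hpos2 : (0:ℝ) ≤ (2:ℝ)^m := by positivity
    calc (9/4) * (3/2:ℝ)^n * 2^m ≤ (9/4) * (3/2:ℝ)^n * (2:ℝ)^((n:ℝ)/3) := by
          apply mul_le_mul_of_nonneg_left h2m (by positivity)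
      _ = 9/4 * ((3/2:ℝ)^n * (2:ℝ)^((n:ℝ)/3)) := by ring
  have hmn : ((m:ℝ)+1) ≤ (n:ℝ)+1 := by
    have : m ≤ n := by omega
    have : (m:ℝ) ≤ n := by exact_mod_cast this
    linarith
  have hHn : (0:ℝ) < (2:ℝ) ^ (binH (1/3) * n) := Real.rpow_pos_of_pos (by norm_num) _
  have hmain : (K : ℝ) ≤ (27/4) * ((n:ℝ)+1) * (2:ℝ) ^ (binH (1/3) * n) := by
    calc (K : ℝ) ≤ 3 * ((m:ℝ)+1) * ((3/2)^(n+2) * 2^m) := hKR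
      _ ≤ 3 * ((m:ℝ)+1) * ((9/4) * (2:ℝ) ^ (binH (1/3) * n)) := by
          apply mul_le_mul_of_nonneg_left hpow (by positivity)
      _ = (27/4) * ((m:ℝ)+1) * (2:ℝ) ^ (binH (1/3) * n) := by ring
      _ ≤ (27/4) * ((n:ℝ)+1) * (2:ℝ) ^ (binH (1/3) * n) := by
          apply mul_le_mul_of_nonneg_right (by linarith) (le_of_lt hHn)
  have hfinal : (27/4 : ℝ) * ((n:ℝ)+1) * (2:ℝ) ^ (binH (1/3) * n)
      ≤ (2:ℝ) ^ ((1 + ε) * binH (1/3) * n) := by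
    have hexp : (1 + ε) * binH (1/3) * n = (ε * binH (1/3)) * n + binH (1/3) * n := by ring
    rw [hexp, Real.rpow_add (by norm_num)]
    apply mul_le_mul_of_nonneg_right (hN n hn) (le_of_lt hHn)
  calc (g n : ℝ) ≤ (K : ℝ) := hgR
    _ ≤ (27/4) * ((n:ℝ)+1) * (2:ℝ) ^ (binH (1/3) * n) := hmain
    _ ≤ (2:ℝ) ^ ((1 + ε) * binH (1/3) * n) := hfinal
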